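/- arXiv:1404.4338 — 2 statements merged into one kernel-verified Lean document; each statement's English description precedes it below -/
import Mathlib

section
/- Let N be a positive natural number and let R : (Fin N → ℝ) → ℝ be a function all of whose mixed partial derivatives of order at most one in each variable exist and are continuous on the closed orthant [0,∞)^N. For a subset S of the index set, write ∂_S R for the mixed partial derivative of R taken once with respect to each variable indexed by S. Then for every point X in [0,∞)^N, R(X) equals the sum, over all subsets S of {0,…,N−1} (including the empty set, whose summand is R(0,…,0)), of the integral over the box ∏_{i∈S}[0,X_i] of ∂_S R evaluated at the point whose i-th coordinate is μ_i for i ∈ S and 0 for i ∉ S. -/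
/-!
Zero the coordinates one at a time. When coordinate `k` is zeroed, the fundamental theorem of
calculus in `xₖ` splits each box integral `∫_{box S} ∂_S R` into the same integral with `xₖ = 0`
plus an integral of `∂ₖ ∂_S R` over `[0, Xₖ]`, and Fubini merges the latter into the box integral
over `S ∪ {k}`. Once every coordinate is zeroed, one box integral per subset `S` remains.
-/

open MeasureTheory Function Set

namespace MeasureTheory

variable {δ : Type*} [DecidableEq δ] {X : δ → Type*} [∀ i, MeasurableSpace (X i)]
  (μ : ∀ i, Measure (X i))

/-- Bochner counterpart of `MeasureTheory.lmarginal`. -/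
noncomputable def marginal (s : Finset δ) (f : (∀ i, X i) → ℝ) (x : ∀ i, X i) : ℝ :=
  ∫ y : ∀ i : s, X i, f (updateFinset x s y) ∂Measure.pi fun i : s => μ i

variable {μ}

theorem marginal_empty (f : (∀ i, X i) → ℝ) (x : ∀ i, X i) : marginal μ ∅ f x = f x := by
  rw [marginal, Measure.pi_of_empty]
  simp

theorem marginal_singleton (f : (∀ i, X i) → ℝ) (i : δ) (x : ∀ i, X i) :
    marginal μ {i} f x = ∫ t, f (update x i t) ∂μ i := by
  rw [marginal, ← (measurePreserving_piUnique fun j : ({i} : Finset δ) => μ j).symm.integral_comp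
    (MeasurableEquiv.measurableEmbedding _)]
  simp only [updateFinset_singleton]
  rfl

variable [∀ i, SigmaFinite (μ i)]

theorem marginal_union {s t : Finset δ} (hst : Disjoint s t) {f : (∀ i, X i) → ℝ} {x : ∀ i, X i}
    (hf : Integrable (fun y => f (updateFinset x (s ∪ t) y)) (Measure.pi fun i : ↥(s ∪ t) => μ i)) :
    marginal μ (s ∪ t) f x = marginal μ s (marginal μ t f) x := by
  have hμ := measurePreserving_piFinsetUnion hst μ
  have he := MeasurableEquiv.measurableEmbedding (MeasurableEquiv.piFinsetUnion X hst)
  rw [marginal, ← hμ.integral_comp he]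
  refine (integral_prod _ ((hμ.integrable_comp_emb he).mpr hf)).trans ?_
  simp_rw [marginal, updateFinset_updateFinset hst]
  rfl

theorem marginal_insert {s : Finset δ} {i : δ} (hi : i ∉ s) {f : (∀ i, X i) → ℝ} {x : ∀ i, X i}
    (hf : Integrable (fun y => f (updateFinset x (insert i s) y))
      (Measure.pi fun j : ↥(insert i s) => μ j)) :
    marginal μ (insert i s) f x = marginal μ s (fun z => ∫ t, f (update z i t) ∂μ i) x := by
  rw [Finset.insert_eq, Finset.union_comm] at hf ⊢
  rw [marginal_union (Finset.disjoint_singleton_right.mpr hi) hf]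
  congr 1
  funext z
  exact marginal_singleton f i z

end MeasureTheory

theorem continuous_updateFinset {ι : Type*} [DecidableEq ι] {π : ι → Type*}
    [∀ i, TopologicalSpace (π i)] (x : ∀ i, π i) (s : Finset ι) :
    Continuous (updateFinset x s) := by
  refine continuous_pi fun i => ?_
  by_cases hi : i ∈ s
  · simpa [updateFinset, hi] using continuous_apply (⟨i, hi⟩ : s)
  · simpa [updateFinset, hi] using continuous_const

theorem Function.updateFinset_nonneg {ι : Type*} [DecidableEq ι] {x : ι → ℝ} {s : Finset ι}
    {y : s → ℝ} (hx : 0 ≤ x) (hy : 0 ≤ y) : 0 ≤ updateFinset x s y := fun i => by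
  unfold updateFinset
  split_ifs
  exacts [hy _, hx i]

section Box

variable {ι : Type*}

noncomputable def boxMeasure (X : ι → ℝ) (i : ι) : Measure ℝ := volume.restrict (Icc 0 (X i))

instance (X : ι → ℝ) : ∀ i, IsFiniteMeasure (boxMeasure X i) := fun _ => by
  unfold boxMeasure
  infer_instance

variable [Fintype ι] (X : ι → ℝ)

theorem setIntegral_univ_pi_Icc_eq_integral_boxMeasure (g : (ι → ℝ) → ℝ) :
    ∫ y in univ.pi fun i => Icc 0 (X i), g y = ∫ y, g y ∂Measure.pi (boxMeasure X) := by
  rw [volume_pi, Measure.restrict_pi_pi]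
  rfl

theorem integrable_pi_boxMeasure_of_continuousOn {g : (ι → ℝ) → ℝ}
    (hg : ContinuousOn g (univ.pi fun i => Icc 0 (X i))) :
    Integrable g (Measure.pi (boxMeasure X)) := by
  unfold boxMeasure
  rw [← Measure.restrict_pi_pi, ← volume_pi]
  exact hg.integrableOn_compact (isCompact_univ_pi fun _ => isCompact_Icc)

theorem ae_pi_boxMeasure_mem : ∀ᵐ y ∂Measure.pi (boxMeasure X), ∀ i, y i ∈ Icc 0 (X i) :=
  ae_all_iff.mpr fun _ =>
    Measure.tendsto_eval_ae_ae.eventually (ae_restrict_mem measurableSet_Icc)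

end Box

variable {ι : Type*} [DecidableEq ι]

/-- `D S` is the mixed partial `∂_S (D ∅)` on the closed orthant `Ici 0`, with one-sided
derivatives on its boundary. -/
structure IsContinuousMixedPartials (D : Finset ι → (ι → ℝ) → ℝ) : Prop where
  hasDerivWithinAt : ∀ (S : Finset ι) (i : ι), i ∉ S → ∀ x : ι → ℝ, 0 ≤ x →
    HasDerivWithinAt (fun t => D S (update x i t)) (D (insert i S) x) (Ici 0) (x i)
  continuousOn : ∀ S, ContinuousOn (D S) (Ici 0)

namespace IsContinuousMixedPartials

variable {D : Finset ι → (ι → ℝ) → ℝ}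

theorem sub_eq_integral_update (hD : IsContinuousMixedPartials D) {S : Finset ι} {k : ι}
    (hk : k ∉ S) {x : ι → ℝ} (hx : 0 ≤ x) {a : ℝ} (ha : 0 ≤ a) :
    D S (update x k a) - D S (update x k 0) = ∫ t in Icc 0 a, D (insert k S) (update x k t) := by
  have hmaps : MapsTo (update x k) (Icc 0 a) (Ici 0) := fun t ht =>
    le_update_iff.mpr ⟨ht.1, fun j _ => hx j⟩
  have hupd : Continuous (update x k) := continuous_const.update k continuous_id
  rw [integral_Icc_eq_integral_Ioc, ← intervalIntegral.integral_of_le ha]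
  refine (intervalIntegral.integral_eq_sub_of_hasDeriv_right_of_le ha
    ((hD.continuousOn S).comp hupd.continuousOn hmaps) (fun t ht => ?_)
    (((hD.continuousOn _).comp hupd.continuousOn hmaps).intervalIntegrable_of_Icc ha)).symm
  have hderiv := hD.hasDerivWithinAt S k hk (update x k t) (hmaps (Ioo_subset_Icc_self ht))
  simp only [update_idem, update_self] at hderiv
  exact hderiv.mono (Ioi_subset_Ici ht.1.le)

theorem integrable_comp_updateFinset (hD : IsContinuousMixedPartials D) (T S : Finset ι)
    {c : ι → ℝ} (hc : 0 ≤ c) (X : ι → ℝ) :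
    Integrable (fun y => D T (updateFinset c S y)) (Measure.pi fun i : S => boxMeasure X i) :=
  integrable_pi_boxMeasure_of_continuousOn (fun i : S => X i) <|
    (hD.continuousOn T).comp (continuous_updateFinset c S).continuousOn
      fun _ hy => updateFinset_nonneg hc fun i => (hy i (mem_univ i)).1

theorem marginal_eq_add_marginal_insert (hD : IsContinuousMixedPartials D) {S : Finset ι}
    {k : ι} (hk : k ∉ S) {c X : ι → ℝ} (hc : 0 ≤ c) (hXk : 0 ≤ X k) (hck : c k = X k) :
    marginal (boxMeasure X) S (D S) c = marginal (boxMeasure X) S (D S) (update c k 0)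
      + marginal (boxMeasure X) (insert k S) (D (insert k S)) (update c k 0) := by
  have hc₀ : 0 ≤ update c k 0 := le_update_iff.mpr ⟨le_rfl, fun j _ => hc j⟩
  rw [marginal_insert hk (hD.integrable_comp_updateFinset _ _ hc₀ X), ← sub_eq_iff_eq_add',
    marginal, marginal, marginal, ← integral_sub (hD.integrable_comp_updateFinset _ _ hc X)
      (hD.integrable_comp_updateFinset _ _ hc₀ X)]
  refine integral_congr_ae ((ae_pi_boxMeasure_mem fun i : S => X i).mono fun y hy => ?_)
  set z := updateFinset (update c k 0) S y
  have hz : 0 ≤ z := updateFinset_nonneg hc₀ fun i => (hy i).1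
  have hzc : updateFinset c S y = update z k (X k) := by
    ext j
    rcases eq_or_ne j k with rfl | hj
    · simp [z, updateFinset, hk, hck]
    · by_cases hjS : j ∈ S <;> simp [z, updateFinset, hjS, hj]
  have hzk : update z k 0 = z := update_eq_self_iff.mpr (by simp [z, updateFinset, hk])
  have hftc := hD.sub_eq_integral_update hk hz hXk
  rw [hzk] at hftc
  dsimp only
  rw [hzc]
  exact hftc

theorem eq_sum_marginal_piecewise (hD : IsContinuousMixedPartials D) {X : ι → ℝ} (hX : 0 ≤ X)
    (T : Finset ι) :
    D ∅ X = ∑ S ∈ T.powerset, marginal (boxMeasure X) S (D S) (T.piecewise 0 X) := by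
  induction T using Finset.induction_on with
  | empty => simp [marginal_empty]
  | @insert k T hk ih =>
    rw [Finset.sum_powerset_insert hk, ih, ← Finset.sum_add_distrib, Finset.piecewise_insert]
    refine Finset.sum_congr rfl fun S hS => ?_
    exact hD.marginal_eq_add_marginal_insert (fun h => hk (Finset.mem_powerset.mp hS h))
      (T.le_piecewise_of_le_of_le le_rfl hX) (hX k) (Finset.piecewise_eq_of_notMem _ _ _ hk)

end IsContinuousMixedPartials

theorem box_decomposition_general (N : ℕ)
    (R : (Fin N → ℝ) → ℝ)
    (D : Finset (Fin N) → (Fin N → ℝ) → ℝ)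
    (hD0 : D ∅ = R)
    (hderiv : ∀ (S : Finset (Fin N)) (i : Fin N), i ∉ S →
      ∀ x : Fin N → ℝ, (∀ j, 0 ≤ x j) →
        HasDerivWithinAt (fun t => D S (Function.update x i t))
          (D (insert i S) x) (Set.Ici 0) (x i))
    (hcont : ∀ S : Finset (Fin N),
      ContinuousOn (D S) {x : Fin N → ℝ | ∀ j, 0 ≤ x j}) :
    ∀ X : Fin N → ℝ, (∀ j, 0 ≤ X j) →
      R X = ∑ S : Finset (Fin N),
        ∫ μ : ↥S → ℝ in Set.univ.pi (fun i : ↥S => Set.Icc 0 (X i)),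
          D S (fun i => if h : i ∈ S then μ ⟨i, h⟩ else 0) := by
  intro X hX
  have hD : IsContinuousMixedPartials D := ⟨hderiv, hcont⟩
  rw [← hD0, hD.eq_sum_marginal_piecewise hX Finset.univ, Finset.powerset_univ,
    Finset.piecewise_univ]
  refine Finset.sum_congr rfl fun S _ => ?_
  rw [setIntegral_univ_pi_Icc_eq_integral_boxMeasure]
  rfl

/-- Main theorem of the paper (box form, after evaluating the Heaviside
functions).  Let `R : (Fin N → ℝ) → ℝ` (`N > 0`) have all mixed partial
derivatives of order at most one in each variable, existing and continuous on
the closed orthant `[0,∞)^N`; the family `D S` records the mixed partial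
`∂_S R` (so `D ∅ = R`, and for `i ∉ S`, `D (insert i S)` is the partial
derivative of `D S` in the `i`-th variable).  Then for every `X` in the
orthant, `R X` is the sum over all subsets `S ⊆ {0,…,N−1}` of the integral
over the box `∏_{i ∈ S} [0, Xᵢ]` of `∂_S R`, evaluated at the point with
`i`-th coordinate `μ i` for `i ∈ S` and `0` otherwise.  (The `S = ∅` summand
is `R(0,…,0)`.) -/
theorem box_decomposition (N : ℕ) (hN : 0 < N)
    (R : (Fin N → ℝ) → ℝ)
    (D : Finset (Fin N) → (Fin N → ℝ) → ℝ)
    (hD0 : D ∅ = R)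
    (hderiv : ∀ (S : Finset (Fin N)) (i : Fin N), i ∉ S →
      ∀ x : Fin N → ℝ, (∀ j, 0 ≤ x j) →
        HasDerivWithinAt (fun t => D S (Function.update x i t))
          (D (insert i S) x) (Set.Ici 0) (x i))
    (hcont : ∀ S : Finset (Fin N),
      ContinuousOn (D S) {x : Fin N → ℝ | ∀ j, 0 ≤ x j}) :
    ∀ X : Fin N → ℝ, (∀ j, 0 ≤ X j) →
      R X = ∑ S : Finset (Fin N),
        ∫ μ : ↥S → ℝ in Set.univ.pi (fun i : ↥S => Set.Icc 0 (X i)),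
          D S (fun i => if h : i ∈ S then μ ⟨i, h⟩ else 0) :=
  box_decomposition_general N R D hD0 hderiv hcont
end

section
/- Let R : ℝ × ℝ → ℝ have continuous partial derivatives ∂R/∂μ₁, ∂R/∂μ₂ and continuous mixed partial derivative ∂²R/∂μ₁∂μ₂ on [0,∞)². Then for all X₁ ≥ 0 and X₂ ≥ 0: R(X₁, X₂) = R(0,0) + ∫₀^∞ (∂R/∂μ₁)(μ₁, 0) σ(X₁ − μ₁) dμ₁ + ∫₀^∞ (∂R/∂μ₂)(0, μ₂) σ(X₂ − μ₂) dμ₂ + ∫₀^∞ ∫₀^∞ (∂²R/∂μ₁∂μ₂)(μ₁, μ₂) σ(X₁ − μ₁) σ(X₂ − μ₂) dμ₁ dμ₂. -/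
/-!
A Heaviside factor `σ(X - μ)` agrees with the indicator of `μ < X` off the null set `{X}`, so it
cuts `∫₀^∞` down to `∫₀^X`. Split `R(X₁,X₂) - R(0,0) = (R(X₁,0) - R(0,0)) + (R(X₁,X₂) - R(X₁,0))`:
by the fundamental theorem of calculus the first bracket is `∫₀^{X₁} R₁(μ₁,0)`, the second is
`∫₀^{X₂} R₂(X₁,μ₂)`, and, applied once more in `μ₁`, `R₂(X₁,μ₂) = R₂(0,μ₂) + ∫₀^{X₁} R₁₂(μ₁,μ₂)`.
-/

open MeasureTheory

noncomputable def heaviside (t : ℝ) : ℝ :=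
  if 0 < t then 1 else if t = 0 then 1 / 2 else 0

open Set

theorem heaviside_sub_ae_eq_indicator (X : ℝ) :
    (fun μ => heaviside (X - μ)) =ᵐ[volume] (Iio X).indicator 1 := by
  filter_upwards [compl_mem_ae_iff.mpr (measure_singleton X)] with μ (hμ : μ ≠ X)
  rcases hμ.lt_or_gt with hlt | hgt
  · simp [heaviside, hlt]
  · simp [heaviside, hgt.not_gt, (sub_neg.mpr hgt).ne]

theorem setIntegral_Ici_mul_heaviside_sub (f : ℝ → ℝ) {a X : ℝ} (haX : a ≤ X) :
    ∫ μ in Ici a, f μ * heaviside (X - μ) = ∫ μ in a..X, f μ := by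
  have hae : (fun μ => f μ * heaviside (X - μ)) =ᵐ[volume] (Iio X).indicator f := by
    filter_upwards [heaviside_sub_ae_eq_indicator X] with μ hμ
    simp [hμ, ← indicator_mul_right]
  rw [integral_congr_ae hae.restrict, setIntegral_indicator measurableSet_Iio, Ici_inter_Iio,
    intervalIntegral.integral_of_le haX, integral_Ioc_eq_integral_Ioo, integral_Ico_eq_integral_Ioo]

theorem setIntegral_Ici_setIntegral_Ici_mul_heaviside_sub (f : ℝ → ℝ → ℝ) {a₁ a₂ X₁ X₂ : ℝ}
    (h₁ : a₁ ≤ X₁) (h₂ : a₂ ≤ X₂) :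
    ∫ μ₂ in Ici a₂, ∫ μ₁ in Ici a₁, f μ₁ μ₂ * heaviside (X₁ - μ₁) * heaviside (X₂ - μ₂) =
      ∫ μ₂ in a₂..X₂, ∫ μ₁ in a₁..X₁, f μ₁ μ₂ := by
  simp only [integral_mul_const, setIntegral_Ici_mul_heaviside_sub _ h₁]
  exact setIntegral_Ici_mul_heaviside_sub _ h₂

theorem integral_eq_sub_of_hasDerivWithinAt_Ici {E : Type*} [NormedAddCommGroup E]
    [NormedSpace ℝ E] [CompleteSpace E] {f f' : ℝ → E} {a b : ℝ}
    (hderiv : ∀ x ∈ Ici a, HasDerivWithinAt f (f' x) (Ici a) x)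
    (hcont : ContinuousOn f' (Ici a)) (hab : a ≤ b) :
    ∫ x in a..b, f' x = f b - f a :=
  intervalIntegral.integral_eq_sub_of_hasDeriv_right_of_le hab
    (fun x hx => (hderiv x hx.1).continuousWithinAt.mono Icc_subset_Ici_self)
    (fun x hx => ((hderiv x hx.1.le).hasDerivAt (Ici_mem_nhds hx.1)).hasDerivWithinAt)
    ((hcont.mono Icc_subset_Ici_self).intervalIntegrable_of_Icc hab)

/-- The two-variable decomposition (the inductive step of the paper's main
theorem from `N = 1` to `N = 2`).  Here `R₁ = ∂R/∂μ₁`, `R₂ = ∂R/∂μ₂` and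
`R₁₂ = ∂²R/∂μ₁∂μ₂` denote the partial derivatives of `R`, assumed to exist and
be continuous on `[0,∞)²`.  Then for all `X₁ ≥ 0`, `X₂ ≥ 0`:
`R(X₁,X₂) = R(0,0) + ∫₀^∞ R₁(μ₁,0) σ(X₁−μ₁) dμ₁ + ∫₀^∞ R₂(0,μ₂) σ(X₂−μ₂) dμ₂
  + ∫₀^∞ ∫₀^∞ R₁₂(μ₁,μ₂) σ(X₁−μ₁) σ(X₂−μ₂) dμ₁ dμ₂`. -/
theorem decomposition_two_var (R R₁ R₂ R₁₂ : ℝ → ℝ → ℝ)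
    (hR₁ : ∀ x₂ ∈ Set.Ici (0 : ℝ), ∀ x₁ ∈ Set.Ici (0 : ℝ),
      HasDerivWithinAt (fun t => R t x₂) (R₁ x₁ x₂) (Set.Ici 0) x₁)
    (hR₂ : ∀ x₁ ∈ Set.Ici (0 : ℝ), ∀ x₂ ∈ Set.Ici (0 : ℝ),
      HasDerivWithinAt (fun t => R x₁ t) (R₂ x₁ x₂) (Set.Ici 0) x₂)
    (hR₁₂ : ∀ x₂ ∈ Set.Ici (0 : ℝ), ∀ x₁ ∈ Set.Ici (0 : ℝ),
      HasDerivWithinAt (fun t => R₂ t x₂) (R₁₂ x₁ x₂) (Set.Ici 0) x₁)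
    (hcont₁ : ContinuousOn (fun p : ℝ × ℝ => R₁ p.1 p.2)
      (Set.Ici 0 ×ˢ Set.Ici 0))
    (hcont₂ : ContinuousOn (fun p : ℝ × ℝ => R₂ p.1 p.2)
      (Set.Ici 0 ×ˢ Set.Ici 0))
    (hcont₁₂ : ContinuousOn (fun p : ℝ × ℝ => R₁₂ p.1 p.2)
      (Set.Ici 0 ×ˢ Set.Ici 0)) :
    ∀ X₁ ∈ Set.Ici (0 : ℝ), ∀ X₂ ∈ Set.Ici (0 : ℝ),
      R X₁ X₂ = R 0 0
        + (∫ μ₁ in Set.Ici (0 : ℝ), R₁ μ₁ 0 * heaviside (X₁ - μ₁))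
        + (∫ μ₂ in Set.Ici (0 : ℝ), R₂ 0 μ₂ * heaviside (X₂ - μ₂))
        + ∫ μ₂ in Set.Ici (0 : ℝ), ∫ μ₁ in Set.Ici (0 : ℝ),
            R₁₂ μ₁ μ₂ * heaviside (X₁ - μ₁) * heaviside (X₂ - μ₂) := by
  intro X₁ (hX₁ : 0 ≤ X₁) X₂ (hX₂ : 0 ≤ X₂)
  have hR₂_integrable (x₁ : ℝ) (hx₁ : 0 ≤ x₁) : IntervalIntegrable (R₂ x₁) volume 0 X₂ :=
    ((hcont₂.uncurry_left x₁ hx₁).mono Icc_subset_Ici_self).intervalIntegrable_of_Icc hX₂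
  have hmixed : ∫ μ₂ in 0..X₂, ∫ μ₁ in 0..X₁, R₁₂ μ₁ μ₂ =
      (∫ μ₂ in 0..X₂, R₂ X₁ μ₂) - ∫ μ₂ in 0..X₂, R₂ 0 μ₂ := by
    rw [← intervalIntegral.integral_sub (hR₂_integrable X₁ hX₁) (hR₂_integrable 0 le_rfl)]
    refine intervalIntegral.integral_congr fun μ₂ hμ₂ => ?_
    rw [uIcc_of_le hX₂] at hμ₂
    exact integral_eq_sub_of_hasDerivWithinAt_Ici (hR₁₂ μ₂ hμ₂.1)
      (hcont₁₂.uncurry_right μ₂ hμ₂.1) hX₁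
  rw [setIntegral_Ici_mul_heaviside_sub _ hX₁, setIntegral_Ici_mul_heaviside_sub _ hX₂,
    setIntegral_Ici_setIntegral_Ici_mul_heaviside_sub _ hX₁ hX₂, hmixed,
    integral_eq_sub_of_hasDerivWithinAt_Ici (hR₁ 0 self_mem_Ici)
      (hcont₁.uncurry_right 0 self_mem_Ici) hX₁,
    integral_eq_sub_of_hasDerivWithinAt_Ici (hR₂ X₁ hX₁) (hcont₂.uncurry_left X₁ hX₁) hX₂]
  ring
end
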